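/- Let X be a topological space and 𝒞 a set of closed subsets of X equipped with the Thurston topology. Let f : 𝒞 → 𝒞 be a homeomorphism with respect to the Thurston topology. Then f preserves strict inclusion in both directions: for all A, B ∈ 𝒞, A ⊊ B if and only if f(A) ⊊ f(B); in particular f is an order isomorphism of (𝒞, ⊆). -/

import Mathlib

/-!
For closed sets, inclusion is the specialization order of the Thurston topology: every
subbasic open set `U_V` containing `A` contains each superset of `A`, while if `A ⊄ B` then
`U_{Bᶜ}` contains `A` but not `B`. A homeomorphism preserves specialization in both
directions, hence inclusion, hence strict inclusion.
-/

open Topology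

/-- The Thurston topology on a set `𝒞` of subsets of a topological space `X`:
the topology generated by the subbasis consisting of the sets
`U_V = {A ∈ 𝒞 : A ∩ V ≠ ∅}` for `V` open in `X`. -/
def thurstonTop {X : Type*} [TopologicalSpace X] (𝒞 : Set (Set X)) :
    TopologicalSpace 𝒞 :=
  TopologicalSpace.generateFrom
    {U | ∃ V : Set X, IsOpen V ∧ U = {A : 𝒞 | ((A : Set X) ∩ V).Nonempty}}

theorem TopologicalSpace.specializes_generateFrom_iff {α : Type*} {g : Set (Set α)} {x y : α} :
    @Specializes α (generateFrom g) x y ↔ ∀ s ∈ g, y ∈ s → x ∈ s := by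
  let _ := generateFrom g
  rw [specializes_iff_forall_open]
  refine ⟨fun h s hs => h s (isOpen_generateFrom_of_mem hs), fun h s hs => ?_⟩
  induction hs with
  | basic s hs => exact h s hs
  | univ => exact fun _ => trivial
  | inter s t _ _ ihs iht => exact fun hy => ⟨ihs hy.1, iht hy.2⟩
  | sUnion S _ ih => exact fun ⟨s, hs, hy⟩ => ⟨s, hs, ih s hs hy⟩

attribute [local instance] thurstonTop

theorem specializes_thurstonTop_iff {X : Type*} [TopologicalSpace X] {𝒞 : Set (Set X)} {A B : 𝒞}
    (hB : IsClosed (B : Set X)) : B ⤳ A ↔ (A : Set X) ⊆ B := by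
  rw [thurstonTop, TopologicalSpace.specializes_generateFrom_iff]
  constructor
  · intro h x hxA
    by_contra hxB
    obtain ⟨y, hyB, hyBc⟩ := h _ ⟨_, hB.isOpen_compl, rfl⟩ ⟨x, hxA, hxB⟩
    exact hyBc hyB
  · rintro hAB _ ⟨V, -, rfl⟩ ⟨x, hxA, hxV⟩
    exact ⟨x, hAB hxA, hxV⟩

/-- A homeomorphism of a set `𝒞` of closed subsets of `X` with respect to the Thurston
topology preserves inclusion and strict inclusion in both directions; in particular it
is an order isomorphism of `(𝒞, ⊆)`. -/
theorem homeomorph_orderIso {X : Type*} [TopologicalSpace X]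
    (𝒞 : Set (Set X)) (hcl : ∀ C ∈ 𝒞, IsClosed C)
    (f : @Homeomorph 𝒞 𝒞 (thurstonTop 𝒞) (thurstonTop 𝒞)) :
    ∀ A B : 𝒞, ((A : Set X) ⊆ (B : Set X) ↔ (f A : Set X) ⊆ (f B : Set X)) ∧
      ((A : Set X) ⊂ (B : Set X) ↔ (f A : Set X) ⊂ (f B : Set X)) := by
  have subset_iff (A B : 𝒞) : (A : Set X) ⊆ B ↔ (f A : Set X) ⊆ f B := by
    rw [← specializes_thurstonTop_iff (hcl B B.2), ← specializes_thurstonTop_iff (hcl _ (f B).2),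
      f.isInducing.specializes_iff]
  exact fun A B => ⟨subset_iff A B, by
    rw [Set.ssubset_def, Set.ssubset_def, subset_iff A B, subset_iff B A]⟩
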